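/- arXiv:2605.30641 — 6 statements merged into one kernel-verified Lean document; each statement's English description precedes it below -/
import Mathlib

section
/- Let V be a positive natural number and P, Q : Fin V → ℝ two probability vectors (nonnegative entries summing to 1). Let A ⊆ Fin V be a set with P(A) > 0 and Q(A) > 0, where P(A) = ∑_{v ∈ A} P(v). Define the restricted (conditional) distributions P|A(v) = P(v)·1_A(v)/P(A) and Q|A(v) = Q(v)·1_A(v)/Q(A). Then TV(P|A, Q|A) ≤ TV(P, Q) / min{P(A), Q(A)}. -/
open Finset

/-- Total variation distance between two probability vectors on `Fin V`. -/
noncomputable def TV {V : ℕ} (P Q : Fin V → ℝ) : ℝ := (1 / 2) * ∑ v, |P v - Q v|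

/-- The conditional (restricted) distribution of `P` given a set `A`. -/
noncomputable def condDist {V : ℕ} (P : Fin V → ℝ) (A : Finset (Fin V)) : Fin V → ℝ :=
  fun v => P v * (if v ∈ A then 1 else 0) / ∑ u ∈ A, P u

/-!
On `A` the difference of the conditional distributions splits as
`P|A - Q|A = (P - Q)/P(A) + Q·(Q(A) - P(A))/(P(A) Q(A))`. The first part has mass
`∑_A |P - Q| / P(A)`; the second has mass `|Q(A) - P(A)| / P(A)`, and since `P` and `Q` have the
same total mass, `Q(A) - P(A) = ∑_{Aᶜ} (P - Q)`. Together this gives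
`TV(P|A, Q|A) ≤ TV(P, Q) / P(A)`, which is already stronger than the bound with the minimum.
-/

theorem abs_sum_sub_sum_le_sum_compl {ι : Type*} [Fintype ι] [DecidableEq ι] {P Q : ι → ℝ}
    (hPQ : ∑ v, P v = ∑ v, Q v) (A : Finset ι) :
    |∑ v ∈ A, Q v - ∑ v ∈ A, P v| ≤ ∑ v ∈ Aᶜ, |P v - Q v| := by
  have hcompl : ∑ v ∈ A, Q v - ∑ v ∈ A, P v = ∑ v ∈ Aᶜ, (P v - Q v) := by
    rw [sum_sub_distrib]
    linarith [sum_add_sum_compl A P, sum_add_sum_compl A Q]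
  rw [hcompl]
  exact abs_sum_le_sum_abs _ _

section condDist

variable {V : ℕ} {P Q : Fin V → ℝ} {A : Finset (Fin V)} {v : Fin V}

theorem condDist_of_mem (hv : v ∈ A) : condDist P A v = P v / ∑ u ∈ A, P u := by
  simp [condDist, hv]

theorem condDist_of_notMem (hv : v ∉ A) : condDist P A v = 0 := by
  simp [condDist, hv]

theorem abs_condDist_sub_condDist_le (hPA : 0 < ∑ u ∈ A, P u) (hQA : 0 < ∑ u ∈ A, Q u)
    (hv : v ∈ A) :
    |condDist P A v - condDist Q A v| ≤
      |P v - Q v| / ∑ u ∈ A, P u +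
        |Q v| * |∑ u ∈ A, Q u - ∑ u ∈ A, P u| / ((∑ u ∈ A, P u) * ∑ u ∈ A, Q u) := by
  set a := ∑ u ∈ A, P u
  set b := ∑ u ∈ A, Q u
  have hsplit : P v / a - Q v / b = (P v - Q v) / a + Q v * (b - a) / (a * b) := by
    field_simp [hPA.ne', hQA.ne']
    ring
  rw [condDist_of_mem hv, condDist_of_mem hv, hsplit]
  calc |(P v - Q v) / a + Q v * (b - a) / (a * b)|
      ≤ |(P v - Q v) / a| + |Q v * (b - a) / (a * b)| := abs_add_le _ _
    _ = _ := by rw [abs_div, abs_div, abs_mul, abs_of_pos hPA, abs_of_pos (mul_pos hPA hQA)]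

theorem sum_abs_condDist_sub_condDist_le (hPQ : ∑ v, P v = ∑ v, Q v) (hQ0 : ∀ v, 0 ≤ Q v)
    (hPA : 0 < ∑ u ∈ A, P u) (hQA : 0 < ∑ u ∈ A, Q u) :
    ∑ v, |condDist P A v - condDist Q A v| ≤ (∑ v, |P v - Q v|) / ∑ u ∈ A, P u := by
  set a := ∑ u ∈ A, P u
  set b := ∑ u ∈ A, Q u
  have hmassQ : ∑ v ∈ A, |Q v| = b := sum_congr rfl fun v _ => abs_of_nonneg (hQ0 v)
  calc ∑ v, |condDist P A v - condDist Q A v|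
      = ∑ v ∈ A, |condDist P A v - condDist Q A v| :=
        (sum_subset (subset_univ A) fun v _ hv => by
          rw [condDist_of_notMem hv, condDist_of_notMem hv, sub_zero, abs_zero]).symm
    _ ≤ ∑ v ∈ A, (|P v - Q v| / a + |Q v| * |b - a| / (a * b)) :=
        sum_le_sum fun v hv => abs_condDist_sub_condDist_le hPA hQA hv
    _ = (∑ v ∈ A, |P v - Q v|) / a + |b - a| / a := by
        rw [sum_add_distrib, ← sum_div, ← sum_div, ← sum_mul, hmassQ]
        field_simp [hPA.ne', hQA.ne']
    _ ≤ (∑ v ∈ A, |P v - Q v|) / a + (∑ v ∈ Aᶜ, |P v - Q v|) / a := by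
        gcongr
        exact abs_sum_sub_sum_le_sum_compl hPQ A
    _ = (∑ v, |P v - Q v|) / a := by rw [← add_div, sum_add_sum_compl]

theorem TV_condDist_le_div (hPQ : ∑ v, P v = ∑ v, Q v) (hQ0 : ∀ v, 0 ≤ Q v)
    (hPA : 0 < ∑ u ∈ A, P u) (hQA : 0 < ∑ u ∈ A, Q u) :
    TV (condDist P A) (condDist Q A) ≤ TV P Q / ∑ u ∈ A, P u := by
  rw [TV, TV, mul_div_assoc]
  gcongr
  exact sum_abs_condDist_sub_condDist_le hPQ hQ0 hPA hQA

end condDist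

theorem tv_condDist_le_general (V : ℕ) (P Q : Fin V → ℝ)
    (hP1 : ∑ v, P v = 1)
    (hQ0 : ∀ v, 0 ≤ Q v) (hQ1 : ∑ v, Q v = 1)
    (A : Finset (Fin V)) (hPA : 0 < ∑ v ∈ A, P v) (hQA : 0 < ∑ v ∈ A, Q v) :
    TV (condDist P A) (condDist Q A) ≤
      TV P Q / min (∑ v ∈ A, P v) (∑ v ∈ A, Q v) := by
  have hTV : 0 ≤ TV P Q := by unfold TV; positivity
  calc TV (condDist P A) (condDist Q A) ≤ TV P Q / ∑ v ∈ A, P v :=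
        TV_condDist_le_div (hP1.trans hQ1.symm) hQ0 hPA hQA
    _ ≤ TV P Q / min (∑ v ∈ A, P v) (∑ v ∈ A, Q v) :=
        div_le_div_of_nonneg_left hTV (lt_min hPA hQA) (min_le_left _ _)

/-- TV between conditional distributions is controlled by the unconditional TV
divided by the smaller of the two restriction masses. -/
theorem tv_condDist_le (V : ℕ) (hV : 0 < V) (P Q : Fin V → ℝ)
    (hP0 : ∀ v, 0 ≤ P v) (hP1 : ∑ v, P v = 1)
    (hQ0 : ∀ v, 0 ≤ Q v) (hQ1 : ∑ v, Q v = 1)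
    (A : Finset (Fin V)) (hPA : 0 < ∑ v ∈ A, P v) (hQA : 0 < ∑ v ∈ A, Q v) :
    TV (condDist P A) (condDist Q A) ≤
      TV P Q / min (∑ v ∈ A, P v) (∑ v ∈ A, Q v) :=
  tv_condDist_le_general V P Q hP1 hQ0 hQ1 A hPA hQA
end

section
/- Let V be a positive natural number, P, Q : Fin V → ℝ probability vectors with Q strictly positive, and let τ ∈ (0,1]. Let A ⊆ Fin V be a nonempty set such that min{P(v), Q(v)} ≥ τ for every v ∈ A. Then the conditional distributions P|A(v) = P(v)·1_A(v)/P(A) and Q|A(v) = Q(v)·1_A(v)/Q(A) are well defined, and TV(P|A, Q|A) ≤ (1/τ) · sqrt( (1/2) · KL(P ‖ Q) ), where KL(P ‖ Q) = ∑_{v} P(v)·log(P(v)/Q(v)) with the convention 0·log 0 = 0. -/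
/-!
Renormalising `P` and `Q` on `A` costs at most `|P(A) - Q(A)|`, which is bounded by the
variation of `P - Q` off `A`; hence conditioning on `A` inflates total variation by at most
`1 / P(A) ≤ 1 / τ`. Pinsker's inequality comes from the pointwise bound
`3 (a - b)² / (2 (a + 2b)) ≤ a log (a / b) + b - a` and Sedrakyan's form of Cauchy–Schwarz with
the weights `2 (a + 2b) / 3`, which sum to `2`. The pointwise bound is `b` times a one-variable
inequality whose difference has an increasing derivative vanishing at `1`.
-/

open Finset

/-- Kullback–Leibler divergence (with the convention `0 · log 0 = 0`, which is
automatic since `0 * x = 0`). -/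
noncomputable def KL {V : ℕ} (P Q : Fin V → ℝ) : ℝ := ∑ v, P v * Real.log (P v / Q v)

open Real

theorem isMinOn_Ioi_of_hasDerivAt {f f' : ℝ → ℝ} {a c : ℝ} (hac : a < c)
    (hf : ∀ x, a < x → HasDerivAt f (f' x) x)
    (hleft : ∀ x, a < x → x < c → f' x ≤ 0) (hright : ∀ x, c < x → 0 ≤ f' x) :
    IsMinOn f (Set.Ioi a) c := by
  have hcont : ∀ s ⊆ Set.Ioi a, ContinuousOn f s := fun s hs x hx =>
    (hf x (hs hx)).continuousAt.continuousWithinAt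
  intro x (hx : a < x)
  rcases le_total x c with hxc | hcx
  · refine antitoneOn_of_hasDerivWithinAt_nonpos (f' := f') (convex_Ioc a c)
      (hcont _ fun y hy => hy.1) (fun y hy => ?_) (fun y hy => ?_)
      ⟨hx, hxc⟩ ⟨hac, le_rfl⟩ hxc
    · rw [interior_Ioc] at hy ⊢
      exact (hf y hy.1).hasDerivWithinAt
    · rw [interior_Ioc] at hy
      exact hleft y hy.1 hy.2
  · refine monotoneOn_of_hasDerivWithinAt_nonneg (f' := f') (convex_Ici c)
      (hcont _ fun y hy => hac.trans_le hy) (fun y hy => ?_) (fun y hy => ?_)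
      Set.self_mem_Ici hcx hcx
    · rw [interior_Ici] at hy ⊢
      exact (hf y (hac.trans hy)).hasDerivWithinAt
    · rw [interior_Ici] at hy
      exact hright y hy

theorem monotoneOn_log_add_div_sq :
    MonotoneOn (fun x => log x + 27 / (2 * (x + 2) ^ 2)) (Set.Ioi 0) := by
  have hderiv : ∀ x : ℝ, 0 < x →
      HasDerivAt (fun x => log x + 27 / (2 * (x + 2) ^ 2)) (x⁻¹ - 27 / (x + 2) ^ 3) x := by
    intro x hx
    refine ((hasDerivAt_log hx.ne').add ((hasDerivAt_const x (27 : ℝ)).fun_div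
      ((((hasDerivAt_id' x).add_const 2).fun_pow 2).const_mul 2) (by positivity))).congr_deriv ?_
    field_simp
    ring
  refine monotoneOn_of_hasDerivWithinAt_nonneg (f' := fun x => x⁻¹ - 27 / (x + 2) ^ 3)
    (convex_Ioi 0)
    (fun x hx => (hderiv x hx).continuousAt.continuousWithinAt) (fun x hx => ?_) (fun x hx => ?_)
  · rw [interior_Ioi] at hx ⊢
    exact (hderiv x hx).hasDerivWithinAt
  · rw [interior_Ioi] at hx
    have hx : (0 : ℝ) < x := hx
    -- `(x + 2) ^ 3 - 27 x = (x - 1) ^ 2 (x + 8)`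
    rw [sub_nonneg, div_le_iff₀ (by positivity), inv_mul_eq_div, le_div_iff₀ hx]
    nlinarith [mul_nonneg (sq_nonneg (x - 1)) (by linarith : (0 : ℝ) ≤ x + 8)]

theorem three_mul_sq_sub_one_div_le_mul_log {x : ℝ} (hx : 0 ≤ x) :
    3 * (x - 1) ^ 2 / (2 * (x + 2)) ≤ x * log x - x + 1 := by
  rcases hx.eq_or_lt with rfl | hx
  · norm_num
  set f : ℝ → ℝ := fun x => x * log x - x + 1 - 3 * (x - 1) ^ 2 / (2 * (x + 2))
  set f' : ℝ → ℝ := fun x => log x + 27 / (2 * (x + 2) ^ 2) - 3 / 2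
  have hderiv : ∀ y, 0 < y → HasDerivAt f (f' y) y := by
    intro y hy
    refine ((((hasDerivAt_mul_log hy.ne').fun_sub (hasDerivAt_id' y)).add_const 1).fun_sub
      (((((hasDerivAt_id' y).sub_const 1).fun_pow 2).const_mul 3).fun_div
        (((hasDerivAt_id' y).add_const 2).const_mul 2) (by positivity))).congr_deriv ?_
    simp only [f']
    field_simp
    ring
  have hf'1 : f' 1 = 0 := by norm_num [f']
  have hmin : IsMinOn f (Set.Ioi 0) 1 :=
    isMinOn_Ioi_of_hasDerivAt one_pos hderiv
      (fun y hy hy1 => hf'1 ▸ sub_le_sub_right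
        (monotoneOn_log_add_div_sq hy (Set.mem_Ioi.2 one_pos) hy1.le) _)
      (fun y hy => hf'1 ▸ sub_le_sub_right
        (monotoneOn_log_add_div_sq (Set.mem_Ioi.2 one_pos) (one_pos.trans hy) hy.le) _)
  have := hmin (Set.mem_Ioi.2 hx)
  norm_num [f] at this
  linarith

theorem three_mul_sq_sub_div_le_mul_log_div {a b : ℝ} (ha : 0 ≤ a) (hb : 0 < b) :
    3 * (a - b) ^ 2 / (2 * (a + 2 * b)) ≤ a * log (a / b) + b - a := by
  have h := mul_le_mul_of_nonneg_left
    (three_mul_sq_sub_one_div_le_mul_log (div_nonneg ha hb.le)) hb.le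
  have hlhs :
      b * (3 * (a / b - 1) ^ 2 / (2 * (a / b + 2))) = 3 * (a - b) ^ 2 / (2 * (a + 2 * b)) := by
    field_simp
  have hrhs : b * (a / b * log (a / b) - a / b + 1) = a * log (a / b) + b - a := by
    field_simp
    ring
  rwa [hlhs, hrhs] at h

theorem TV_nonneg {V : ℕ} (P Q : Fin V → ℝ) : 0 ≤ TV P Q := by
  unfold TV
  positivity

theorem sq_sum_abs_sub_le_two_mul_KL {V : ℕ} {P Q : Fin V → ℝ} (hP0 : ∀ v, 0 ≤ P v)
    (hP1 : ∑ v, P v = 1) (hQpos : ∀ v, 0 < Q v) (hQ1 : ∑ v, Q v = 1) :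
    (∑ v, |P v - Q v|) ^ 2 ≤ 2 * KL P Q := by
  set w : Fin V → ℝ := fun v => 2 * (P v + 2 * Q v) / 3
  have hw : ∀ v ∈ univ, 0 < w v := fun v _ => by have := hP0 v; have := hQpos v; positivity
  have hw_sum : ∑ v, w v = 2 := by
    simp only [w, ← sum_div, ← mul_sum, sum_add_distrib, hP1, hQ1]
    norm_num
  have hKL : KL P Q = ∑ v, (P v * log (P v / Q v) + Q v - P v) := by
    rw [KL, sum_sub_distrib, sum_add_distrib, hP1, hQ1]
    ring
  have hCS := sq_sum_div_le_sum_sq_div univ (fun v => |P v - Q v|) hw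
  rw [hw_sum] at hCS
  calc (∑ v, |P v - Q v|) ^ 2 ≤ 2 * ∑ v, |P v - Q v| ^ 2 / w v := by linarith
    _ ≤ 2 * KL P Q := by
      rw [hKL]
      gcongr with v
      refine le_of_eq_of_le ?_ (three_mul_sq_sub_div_le_mul_log_div (hP0 v) (hQpos v))
      simp only [w, sq_abs]
      field_simp

theorem TV_le_sqrt_KL {V : ℕ} {P Q : Fin V → ℝ} (hP0 : ∀ v, 0 ≤ P v)
    (hP1 : ∑ v, P v = 1) (hQpos : ∀ v, 0 < Q v) (hQ1 : ∑ v, Q v = 1) :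
    TV P Q ≤ √(1 / 2 * KL P Q) := by
  apply le_sqrt_of_sq_le
  have := sq_sum_abs_sub_le_two_mul_KL hP0 hP1 hQpos hQ1
  rw [TV]
  linarith

theorem TV_condDist_le {V : ℕ} {P Q : Fin V → ℝ} {A : Finset (Fin V)}
    (hQ : ∀ v ∈ A, 0 ≤ Q v) (hPQ : ∑ v, P v = ∑ v, Q v)
    (hp : 0 < ∑ v ∈ A, P v) (hq : 0 < ∑ v ∈ A, Q v) :
    TV (condDist P A) (condDist Q A) ≤ TV P Q / ∑ v ∈ A, P v := by
  set p := ∑ v ∈ A, P v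
  set q := ∑ v ∈ A, Q v
  have hrestrict :
      ∑ v, |condDist P A v - condDist Q A v| = ∑ v ∈ A, |P v / p - Q v / q| := by
    rw [← sum_subset (subset_univ A) fun v _ hv => by simp [condDist, hv]]
    exact sum_congr rfl fun v hv => by simp [condDist, hv, p, q]
  have hgap : |q - p| ≤ ∑ v ∈ Aᶜ, |P v - Q v| := by
    have hcompl : q - p = ∑ v ∈ Aᶜ, (P v - Q v) := by
      rw [sum_sub_distrib]
      have := sum_add_sum_compl A P
      have := sum_add_sum_compl A Q
      linarith
    exact hcompl ▸ abs_sum_le_sum_abs _ _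
  have hsplit : ∀ v ∈ A,
      |P v / p - Q v / q| ≤ |P v - Q v| / p + Q v * |q - p| / (p * q) := by
    intro v hv
    calc |P v / p - Q v / q| = |(P v - Q v) / p + Q v * (q - p) / (p * q)| := by
          congr 1
          field_simp
          ring
      _ ≤ |(P v - Q v) / p| + |Q v * (q - p) / (p * q)| := abs_add_le _ _
      _ = |P v - Q v| / p + Q v * |q - p| / (p * q) := by
          rw [abs_div, abs_div, abs_mul, abs_of_pos hp, abs_of_nonneg (hQ v hv),
            abs_of_pos (mul_pos hp hq)]
  calc TV (condDist P A) (condDist Q A) = 1 / 2 * ∑ v ∈ A, |P v / p - Q v / q| := by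
        rw [TV, hrestrict]
    _ ≤ 1 / 2 * ∑ v ∈ A, (|P v - Q v| / p + Q v * |q - p| / (p * q)) := by
        gcongr with v hv
        exact hsplit v hv
    _ = 1 / 2 * ((∑ v ∈ A, |P v - Q v| + |q - p|) / p) := by
        rw [sum_add_distrib, ← sum_div, ← sum_div, ← sum_mul,
          show ∑ v ∈ A, Q v = q from rfl]
        field_simp
    _ ≤ 1 / 2 * ((∑ v ∈ A, |P v - Q v| + ∑ v ∈ Aᶜ, |P v - Q v|) / p) := by gcongr
    _ = TV P Q / p := by
        rw [sum_add_sum_compl, TV]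
        ring

theorem tv_cond_le_pinsker_general (V : ℕ) (P Q : Fin V → ℝ)
    (hP0 : ∀ v, 0 ≤ P v) (hP1 : ∑ v, P v = 1)
    (hQpos : ∀ v, 0 < Q v) (hQ1 : ∑ v, Q v = 1)
    (τ : ℝ) (hτ : τ ∈ Set.Ioc (0 : ℝ) 1)
    (A : Finset (Fin V)) (hA : A.Nonempty)
    (hmin : ∀ v ∈ A, τ ≤ min (P v) (Q v)) :
    0 < ∑ v ∈ A, P v ∧ 0 < ∑ v ∈ A, Q v ∧
      TV (condDist P A) (condDist Q A) ≤
        (1 / τ) * Real.sqrt ((1 / 2) * KL P Q) := by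
  obtain ⟨v₀, hv₀⟩ := hA
  have hτP : τ ≤ ∑ v ∈ A, P v :=
    ((hmin v₀ hv₀).trans (min_le_left _ _)).trans (single_le_sum (fun v _ => hP0 v) hv₀)
  have hPA : 0 < ∑ v ∈ A, P v := hτ.1.trans_le hτP
  have hQA : 0 < ∑ v ∈ A, Q v := sum_pos (fun v _ => hQpos v) ⟨v₀, hv₀⟩
  refine ⟨hPA, hQA, ?_⟩
  calc TV (condDist P A) (condDist Q A) ≤ TV P Q / ∑ v ∈ A, P v :=
        TV_condDist_le (fun v _ => (hQpos v).le) (hP1.trans hQ1.symm) hPA hQA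
    _ ≤ TV P Q / τ := div_le_div_of_nonneg_left (TV_nonneg P Q) hτ.1 hτP
    _ ≤ 1 / τ * √(1 / 2 * KL P Q) := by
        rw [one_div_mul_eq_div]
        exact div_le_div_of_nonneg_right (TV_le_sqrt_KL hP0 hP1 hQpos hQ1) hτ.1.le

/-- On a common support certified at level `τ`, the conditional distributions are
well defined and their TV gap is bounded by `(1/τ) · sqrt(KL/2)`. -/
theorem tv_cond_le_pinsker (V : ℕ) (hV : 0 < V) (P Q : Fin V → ℝ)
    (hP0 : ∀ v, 0 ≤ P v) (hP1 : ∑ v, P v = 1)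
    (hQpos : ∀ v, 0 < Q v) (hQ1 : ∑ v, Q v = 1)
    (τ : ℝ) (hτ : τ ∈ Set.Ioc (0 : ℝ) 1)
    (A : Finset (Fin V)) (hA : A.Nonempty)
    (hmin : ∀ v ∈ A, τ ≤ min (P v) (Q v)) :
    0 < ∑ v ∈ A, P v ∧ 0 < ∑ v ∈ A, Q v ∧
      TV (condDist P A) (condDist Q A) ≤
        (1 / τ) * Real.sqrt ((1 / 2) * KL P Q) :=
  tv_cond_le_pinsker_general V P Q hP0 hP1 hQpos hQ1 τ hτ A hA hmin
end

section
/- Let V be a positive natural number, q : Fin V → ℝ a strictly positive probability vector, and r : Fin V → ℝ. For β ≥ 0 define the exponentially tilted distribution π_β(v) = q(v)·exp(β·r(v)) / ∑_{u} q(u)·exp(β·r(u)). Then the map β ↦ KL(π_β ‖ q) is nondecreasing on [0, ∞): for all 0 ≤ β₁ ≤ β₂, KL(π_{β₁} ‖ q) ≤ KL(π_{β₂} ‖ q). -/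
open Finset

/-- The exponentially tilted distribution of a base distribution `q` along `r`. -/
noncomputable def tilt {V : ℕ} (q r : Fin V → ℝ) (β : ℝ) : Fin V → ℝ :=
  fun v => q v * Real.exp (β * r v) / ∑ u, q u * Real.exp (β * r u)

section aux

lemma Zpos {V : ℕ} (hV : 0 < V) (q r : Fin V → ℝ) (hq : ∀ v, 0 < q v) (β : ℝ) :
    0 < ∑ u, q u * Real.exp (β * r u) := by
  apply Finset.sum_pos
  · intro i _; exact mul_pos (hq i) (Real.exp_pos _)
  · exact ⟨⟨0, hV⟩, Finset.mem_univ _⟩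

lemma tilt_sum_one {V : ℕ} (hV : 0 < V) (q r : Fin V → ℝ) (hq : ∀ v, 0 < q v) (β : ℝ) :
    ∑ v, tilt q r β v = 1 := by
  have hZ := Zpos hV q r hq β
  simp only [tilt]
  rw [← Finset.sum_div]
  field_simp

/-- Gibbs' inequality. -/
lemma gibbs {V : ℕ} (p s : Fin V → ℝ) (hp : ∀ v, 0 < p v) (hs : ∀ v, 0 < s v)
    (hp1 : ∑ v, p v = 1) (hs1 : ∑ v, s v = 1) :
    0 ≤ ∑ v, p v * Real.log (p v / s v) := by
  have h : ∀ v : Fin V, p v - s v ≤ p v * Real.log (p v / s v) := by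
    intro v
    have h1 : Real.log (s v / p v) ≤ s v / p v - 1 :=
      Real.log_le_sub_one_of_pos (div_pos (hs v) (hp v))
    have h2 : Real.log (p v / s v) = - Real.log (s v / p v) := by
      rw [← Real.log_inv]; congr 1; field_simp
    have h3 : p v * (s v / p v) = s v := by
      rw [← mul_div_assoc]; exact mul_div_cancel_left₀ _ (ne_of_gt (hp v))
    rw [h2]
    nlinarith [hp v]
  calc (0:ℝ) = ∑ v, (p v - s v) := by rw [Finset.sum_sub_distrib, hp1, hs1]; ring
    _ ≤ _ := Finset.sum_le_sum fun v _ => h v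

/-- The mean of `r` under the tilted distribution is monotone (cross-multiplied form). -/
lemma mean_mono {V : ℕ} (q r : Fin V → ℝ) (hq : ∀ v, 0 < q v)
    (β₁ β₂ : ℝ) (h12 : β₁ ≤ β₂) :
    (∑ v, q v * r v * Real.exp (β₁ * r v)) * (∑ u, q u * Real.exp (β₂ * r u)) ≤
    (∑ v, q v * r v * Real.exp (β₂ * r v)) * (∑ u, q u * Real.exp (β₁ * r u)) := by
  set F : Fin V → Fin V → ℝ := fun v u =>
    q v * q u * (r v - r u) *
      (Real.exp (β₂ * r v + β₁ * r u) - Real.exp (β₁ * r v + β₂ * r u)) with hF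
  set G : Fin V → Fin V → ℝ := fun v u =>
    q v * q u * r v *
      (Real.exp (β₂ * r v + β₁ * r u) - Real.exp (β₁ * r v + β₂ * r u)) with hG
  have hFG : ∀ v u, F v u = G v u + G u v := by
    intro v u; simp only [hF, hG]; ring
  have hFnn : ∀ v u, 0 ≤ F v u := by
    intro v u
    have hqq : 0 ≤ q v * q u := le_of_lt (mul_pos (hq v) (hq u))
    rcases le_total (r u) (r v) with h | h
    · have hexp : Real.exp (β₁ * r v + β₂ * r u) ≤ Real.exp (β₂ * r v + β₁ * r u) :=
        Real.exp_le_exp.mpr (by nlinarith)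
      simp only [hF]
      have := sub_nonneg.mpr h
      have := sub_nonneg.mpr hexp
      positivity
    · have hexp : Real.exp (β₂ * r v + β₁ * r u) ≤ Real.exp (β₁ * r v + β₂ * r u) :=
        Real.exp_le_exp.mpr (by nlinarith)
      simp only [hF]
      have hx : q v * q u * (r v - r u) ≤ 0 :=
        mul_nonpos_of_nonneg_of_nonpos hqq (by linarith)
      have hy : Real.exp (β₂ * r v + β₁ * r u) - Real.exp (β₁ * r v + β₂ * r u) ≤ 0 := by
        linarith
      nlinarith [mul_nonneg (neg_nonneg.2 hx) (neg_nonneg.2 hy)]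
  have hsumG : ∑ v, ∑ u, G v u =
      (∑ v, q v * r v * Real.exp (β₂ * r v)) * (∑ u, q u * Real.exp (β₁ * r u)) -
      (∑ v, q v * r v * Real.exp (β₁ * r v)) * (∑ u, q u * Real.exp (β₂ * r u)) := by
    rw [Finset.sum_mul_sum, Finset.sum_mul_sum, ← Finset.sum_sub_distrib]
    apply Finset.sum_congr rfl
    intro v _
    rw [← Finset.sum_sub_distrib]
    apply Finset.sum_congr rfl
    intro u _
    simp only [hG, Real.exp_add]
    ring
  have hsumF : ∑ v, ∑ u, F v u = 2 * ∑ v, ∑ u, G v u := by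
    calc ∑ v, ∑ u, F v u = ∑ v, ∑ u, (G v u + G u v) := by
          apply Finset.sum_congr rfl; intro v _
          apply Finset.sum_congr rfl; intro u _; exact hFG v u
      _ = (∑ v, ∑ u, G v u) + ∑ v, ∑ u, G u v := by
          rw [← Finset.sum_add_distrib]
          apply Finset.sum_congr rfl; intro v _
          rw [Finset.sum_add_distrib]
      _ = 2 * ∑ v, ∑ u, G v u := by rw [Finset.sum_comm]; ring
  have h0 : 0 ≤ ∑ v, ∑ u, F v u :=
    Finset.sum_nonneg fun v _ => Finset.sum_nonneg fun u _ => hFnn v u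
  nlinarith [hsumG, hsumF, h0]

/-- KL of the tilt from the base, closed form. -/
lemma KL_tilt_eq {V : ℕ} (hV : 0 < V) (q r : Fin V → ℝ) (hq : ∀ v, 0 < q v) (β : ℝ) :
    KL (tilt q r β) q =
      β * (∑ v, tilt q r β v * r v) - Real.log (∑ u, q u * Real.exp (β * r u)) := by
  have hZ := Zpos hV q r hq β
  have hlog : ∀ v : Fin V, Real.log (tilt q r β v / q v) =
      β * r v - Real.log (∑ u, q u * Real.exp (β * r u)) := by
    intro v
    have h1 : tilt q r β v / q v =
        Real.exp (β * r v) / (∑ u, q u * Real.exp (β * r u)) := by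
      simp only [tilt]
      rw [div_div, mul_comm (∑ u, q u * Real.exp (β * r u)) (q v),
        mul_div_mul_left _ _ (ne_of_gt (hq v))]
    rw [h1, Real.log_div (Real.exp_ne_zero _) (ne_of_gt hZ), Real.log_exp]
  simp only [KL]
  have : ∀ v : Fin V, tilt q r β v * Real.log (tilt q r β v / q v) =
      β * (tilt q r β v * r v) -
        Real.log (∑ u, q u * Real.exp (β * r u)) * tilt q r β v := by
    intro v; rw [hlog v]; ring
  rw [Finset.sum_congr rfl fun v _ => this v, Finset.sum_sub_distrib,
    ← Finset.mul_sum, ← Finset.mul_sum, tilt_sum_one hV q r hq β]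
  ring

end aux

/-- The KL divergence of the exponentially tilted distribution from the base
distribution is nondecreasing in the tilting parameter on `[0, ∞)`. -/
theorem kl_tilt_monotone (V : ℕ) (hV : 0 < V) (q : Fin V → ℝ)
    (hq : ∀ v, 0 < q v) (hq1 : ∑ v, q v = 1) (r : Fin V → ℝ)
    (β₁ β₂ : ℝ) (h1 : 0 ≤ β₁) (h12 : β₁ ≤ β₂) :
    KL (tilt q r β₁) q ≤ KL (tilt q r β₂) q := by
  have hZ1 := Zpos hV q r hq β₁
  have hZ2 := Zpos hV q r hq β₂
  have htiltpos : ∀ β v, 0 < tilt q r β v := by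
    intro β v
    have := Zpos hV q r hq β
    simp only [tilt]
    exact div_pos (mul_pos (hq v) (Real.exp_pos _)) this
  set E₁ := ∑ v, tilt q r β₁ v * r v with hE1
  set E₂ := ∑ v, tilt q r β₂ v * r v with hE2
  -- mean monotone: E₁ ≤ E₂
  have hEmono : E₁ ≤ E₂ := by
    have hmm := mean_mono q r hq β₁ β₂ h12
    have hE1' : E₁ = (∑ v, q v * r v * Real.exp (β₁ * r v)) / (∑ u, q u * Real.exp (β₁ * r u)) := by
      rw [hE1]
      rw [eq_div_iff (ne_of_gt hZ1), Finset.sum_mul]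
      apply Finset.sum_congr rfl
      intro v _
      simp only [tilt]
      field_simp
    have hE2' : E₂ = (∑ v, q v * r v * Real.exp (β₂ * r v)) / (∑ u, q u * Real.exp (β₂ * r u)) := by
      rw [hE2]
      rw [eq_div_iff (ne_of_gt hZ2), Finset.sum_mul]
      apply Finset.sum_congr rfl
      intro v _
      simp only [tilt]
      field_simp
    rw [hE1', hE2', div_le_div_iff₀ hZ1 hZ2]
    linarith [hmm]
  -- Gibbs: KL(π₂ ‖ π₁) ≥ 0 gives log Z₁ - log Z₂ ≥ (β₁ - β₂) E₂
  have hgibbs : 0 ≤ (β₂ - β₁) * E₂ +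
      Real.log (∑ u, q u * Real.exp (β₁ * r u)) -
      Real.log (∑ u, q u * Real.exp (β₂ * r u)) := by
    have hg := gibbs (tilt q r β₂) (tilt q r β₁) (htiltpos β₂) (htiltpos β₁)
      (tilt_sum_one hV q r hq β₂) (tilt_sum_one hV q r hq β₁)
    have hlogratio : ∀ v : Fin V,
        Real.log (tilt q r β₂ v / tilt q r β₁ v) =
          (β₂ - β₁) * r v + Real.log (∑ u, q u * Real.exp (β₁ * r u)) -
            Real.log (∑ u, q u * Real.exp (β₂ * r u)) := by
      intro v
      have hqv := hq v
      have h1 : tilt q r β₂ v / tilt q r β₁ v =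
          (Real.exp (β₂ * r v) * (∑ u, q u * Real.exp (β₁ * r u))) /
          (Real.exp (β₁ * r v) * (∑ u, q u * Real.exp (β₂ * r u))) := by
        simp only [tilt]
        field_simp
      rw [h1, Real.log_div (by positivity) (by positivity),
        Real.log_mul (Real.exp_ne_zero _) (ne_of_gt hZ1),
        Real.log_mul (Real.exp_ne_zero _) (ne_of_gt hZ2),
        Real.log_exp, Real.log_exp]
      ring
    have hexpand : ∑ v, tilt q r β₂ v * Real.log (tilt q r β₂ v / tilt q r β₁ v) =
        (β₂ - β₁) * E₂ +
          (Real.log (∑ u, q u * Real.exp (β₁ * r u)) -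
            Real.log (∑ u, q u * Real.exp (β₂ * r u))) * ∑ v, tilt q r β₂ v := by
      rw [hE2, Finset.mul_sum, Finset.mul_sum, ← Finset.sum_add_distrib]
      apply Finset.sum_congr rfl
      intro v _
      rw [hlogratio v]
      ring
    rw [hexpand, tilt_sum_one hV q r hq β₂] at hg
    linarith
  rw [KL_tilt_eq hV q r hq β₁, KL_tilt_eq hV q r hq β₂, ← hE1, ← hE2]
  nlinarith [mul_nonneg h1 (sub_nonneg.mpr hEmono)]
end

section
/- Let n be a positive natural number and α ∈ (0,1) with ⌈(1−α)·(n+1)⌉ ≤ n. Let S₁, …, S_{n+1} be real-valued random variables on a probability space whose joint distribution is exchangeable (invariant under every permutation of the n+1 indices). Let q be the k-th smallest value among S₁, …, S_n, where k = ⌈(1−α)·(n+1)⌉. Then P(S_{n+1} ≤ q) ≥ 1 − α. -/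
open MeasureTheory Finset

/-- The `k`-th smallest entry (order statistic) of a finite tuple of reals,
where `i : Fin n` denotes the (0-indexed) position in the sorted order. -/
noncomputable def orderStat {n : ℕ} (f : Fin n → ℝ) (i : Fin n) : ℝ :=
  f (Tuple.sort f i)

/-!
Let `rank x j` be the number of entries of `x` strictly below `x j`; the event is
`rank S (last n) ≤ k - 1`. For every outcome, the indices of the `k` smallest scores satisfy
`rank S j ≤ k - 1`, so these `n + 1` events have probabilities summing to at least `k`.
Exchangeability, applied to the transposition of `j` and `last n`, makes all of them equally
likely, so each has probability at least `k / (n + 1) ≥ 1 - α`.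
-/

lemma card_filter_comp_perm {ι : Type*} [Fintype ι] (σ : Equiv.Perm ι) (p : ι → Prop)
    [DecidablePred p] : #{i | p (σ i)} = #{i | p i} := by
  simp only [card_filter]
  exact Equiv.sum_comp σ fun i => if p i then 1 else 0

noncomputable def rank {ι : Type*} [Fintype ι] (x : ι → ℝ) (j : ι) : ℕ := #{i | x i < x j}

section rank

variable {ι : Type*} [Fintype ι]

lemma rank_comp_perm (x : ι → ℝ) (σ : Equiv.Perm ι) (j : ι) :
    rank (x ∘ σ) j = rank x (σ j) :=
  card_filter_comp_perm σ (fun i => x i < x (σ j))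

lemma measurable_rank (j : ι) : Measurable fun x : ι → ℝ => rank x j := by
  simp only [rank, card_filter]
  exact Finset.measurable_sum _ fun i _ => Measurable.ite
    (measurableSet_lt (measurable_pi_apply i) (measurable_pi_apply j)) measurable_const
    measurable_const

end rank

lemma le_orderStat_iff {m : ℕ} (f : Fin m → ℝ) (j : Fin m) (y : ℝ) :
    y ≤ orderStat f j ↔ #{i | f i < y} ≤ j := by
  rw [← card_filter_comp_perm (Tuple.sort f), ← not_lt, ← not_lt, orderStat]
  exact not_congr (Tuple.lt_card_lt_iff_apply_lt_of_monotone (Tuple.monotone_sort f)).symm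

lemma lt_card_rank_le {m : ℕ} (x : Fin m → ℝ) (j : Fin m) : (j : ℕ) < #{l | rank x l ≤ j} := by
  have hsorted : (j : ℕ) < #{i | x (Tuple.sort x i) ≤ orderStat x j} :=
    (Tuple.lt_card_le_iff_apply_le_of_monotone (Tuple.monotone_sort x)).2 le_rfl
  rw [card_filter_comp_perm (Tuple.sort x) (fun l => x l ≤ orderStat x j)] at hsorted
  simp only [le_orderStat_iff] at hsorted
  exact hsorted

lemma rank_last {n : ℕ} (x : Fin (n + 1) → ℝ) :
    rank x (Fin.last n) = #{i : Fin n | x i.castSucc < x (Fin.last n)} := by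
  rw [rank, card_filter, card_filter, Fin.sum_univ_castSucc]
  simp

lemma le_orderStat_castSucc_iff {n : ℕ} (x : Fin (n + 1) → ℝ) (j : Fin n) :
    x (Fin.last n) ≤ orderStat (fun i => x i.castSucc) j ↔ rank x (Fin.last n) ≤ j := by
  rw [le_orderStat_iff, rank_last]

lemma mul_measure_univ_le_sum_measure_of_le_card {Ω ι : Type*} [MeasurableSpace Ω] [Fintype ι]
    (μ : Measure Ω) {P : Ω → ι → Prop} [∀ ω, DecidablePred (P ω)]
    (hP : ∀ j, MeasurableSet {ω | P ω j}) {N : ℕ} (hN : ∀ ω, N ≤ #{j | P ω j}) :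
    N * μ Set.univ ≤ ∑ j, μ {ω | P ω j} := by
  have hcount : ∀ ω, (N : ENNReal) ≤ ∑ j, {ω | P ω j}.indicator 1 ω := fun ω => by
    simp only [Set.indicator_apply, Set.mem_ofPred_eq, Pi.one_apply, sum_boole]
    exact_mod_cast hN ω
  calc (N : ENNReal) * μ Set.univ = ∫⁻ _, (N : ENNReal) ∂μ := by simp
    _ ≤ ∫⁻ ω, ∑ j, {ω | P ω j}.indicator 1 ω ∂μ := lintegral_mono hcount
    _ = ∑ j, μ {ω | P ω j} := by
      rw [lintegral_finsetSum _ fun j _ => measurable_one.indicator (hP j)]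
      simp_rw [lintegral_indicator_one (hP _)]

section exchangeable

variable {Ω ι : Type*} [MeasurableSpace Ω] [Fintype ι] [DecidableEq ι] {μ : Measure Ω}
  {X : Ω → ι → ℝ}

lemma measure_rank_le_eq (hX : Measurable X)
    (hexch : ∀ σ : Equiv.Perm ι, μ.map (fun ω => X ω ∘ σ) = μ.map X) (c : ℕ) (j j' : ι) :
    μ {ω | rank (X ω) j ≤ c} = μ {ω | rank (X ω) j' ≤ c} := by
  have hT : MeasurableSet {x : ι → ℝ | rank x j' ≤ c} :=
    measurableSet_le (measurable_rank j') measurable_const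
  have hσ : Measurable fun ω => X ω ∘ Equiv.swap j j' :=
    measurable_pi_lambda _ fun i => (measurable_pi_apply _).comp hX
  calc μ {ω | rank (X ω) j ≤ c}
      = μ ((fun ω => X ω ∘ Equiv.swap j j') ⁻¹' {x | rank x j' ≤ c}) := by
        simp [rank_comp_perm]
    _ = μ (X ⁻¹' {x | rank x j' ≤ c}) := by
        rw [← Measure.map_apply hσ hT, hexch, Measure.map_apply hX hT]
    _ = μ {ω | rank (X ω) j' ≤ c} := rfl

lemma succ_le_mul_measure_rank_le {m : ℕ} {X : Ω → Fin m → ℝ} [IsProbabilityMeasure μ]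
    (hX : Measurable X) (hexch : ∀ σ : Equiv.Perm (Fin m), μ.map (fun ω => X ω ∘ σ) = μ.map X)
    {c : ℕ} (hc : c < m) (j : Fin m) : ((c + 1 : ℕ) : ENNReal) ≤ m * μ {ω | rank (X ω) j ≤ c} := by
  have hmeas (l : Fin m) : MeasurableSet {ω | rank (X ω) l ≤ c} :=
    measurableSet_le ((measurable_rank l).comp hX) measurable_const
  calc ((c + 1 : ℕ) : ENNReal) = (c + 1 : ℕ) * μ Set.univ := by simp
    _ ≤ ∑ l, μ {ω | rank (X ω) l ≤ c} :=
      mul_measure_univ_le_sum_measure_of_le_card μ hmeas fun ω => lt_card_rank_le (X ω) ⟨c, hc⟩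
    _ = m * μ {ω | rank (X ω) j ≤ c} := by simp [measure_rank_le_eq hX hexch c _ j]

end exchangeable

/-- Split-conformal coverage: if the `n+1` scores are exchangeable and `q` is
the `k`-th smallest of the first `n` scores with `k = ⌈(1−α)(n+1)⌉ ≤ n`, then
the last score is at most `q` with probability at least `1 − α`. -/
theorem conformal_marginal_coverage {Ω : Type*} [MeasurableSpace Ω]
    (μ : Measure Ω) [IsProbabilityMeasure μ]
    (n : ℕ) (hn : 0 < n) (α : ℝ)
    (k : ℕ) (hk : k = ⌈(1 - α) * (n + 1 : ℝ)⌉₊) (hkn : k ≤ n)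
    (S : Fin (n + 1) → Ω → ℝ) (hS : ∀ i, Measurable (S i))
    (hexch : ∀ σ : Equiv.Perm (Fin (n + 1)),
      μ.map (fun ω => fun i => S (σ i) ω) = μ.map (fun ω => fun i => S i ω)) :
    1 - α ≤
      (μ {ω | S (Fin.last n) ω ≤
        orderStat (fun i : Fin n => S i.castSucc ω) ⟨k - 1, by omega⟩}).toReal := by
  have hevent : {ω | S (Fin.last n) ω ≤
      orderStat (fun i : Fin n => S i.castSucc ω) ⟨k - 1, by omega⟩} =
      {ω | rank (fun i => S i ω) (Fin.last n) ≤ k - 1} := by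
    ext ω
    exact le_orderStat_castSucc_iff (fun i => S i ω) _
  have hcount : ((k - 1 + 1 : ℕ) : ENNReal) ≤
      (n + 1 : ℕ) * μ {ω | rank (fun i => S i ω) (Fin.last n) ≤ k - 1} :=
    succ_le_mul_measure_rank_le (measurable_pi_lambda _ hS) hexch (by omega) _
  have hceil : (1 - α) * (n + 1) ≤ ((k - 1 + 1 : ℕ) : ℝ) :=
    calc (1 - α) * (n + 1) ≤ k := hk ▸ Nat.le_ceil _
      _ ≤ _ := by norm_cast; omega
  have hreal := ENNReal.toReal_mono (by finiteness) hcount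
  rw [ENNReal.toReal_mul, ENNReal.toReal_natCast, ENNReal.toReal_natCast] at hreal
  rw [hevent]
  push_cast at hceil hreal
  exact le_of_mul_le_mul_right (by linarith) (by positivity : (0 : ℝ) < n + 1)
end

section
/- Let V, n be positive natural numbers, α ∈ (0,1) with k = ⌈(1−α)(n+1)⌉ ≤ n. Suppose on a probability space we have, for each i ∈ {1,…,n+1}, a pair of probability vectors (P_i, Q_i) on Fin V and a token v_i ∈ Fin V, and define the dual-branch nonconformity score S_i = 1 − min{P_i(v_i), Q_i(v_i)}. Assume the joint law of (S₁, …, S_{n+1}) is exchangeable. Let q be the k-th smallest value among S₁, …, S_n and τ = 1 − q. Then with probability at least 1 − α, min{P_{n+1}(v_{n+1}), Q_{n+1}(v_{n+1})} ≥ τ, i.e., the test token v_{n+1} simultaneously has probability at least τ under both the fused branch P_{n+1} and the counterfactual branch Q_{n+1}. -/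
open MeasureTheory Finset

open scoped ENNReal

lemma aux_le_orderStat {n : ℕ} (f : Fin n → ℝ) (t : ℝ) (k : ℕ)
    (hkn : k - 1 < n)
    (h : (univ.filter fun i => f i < t).card ≤ k - 1) :
    t ≤ orderStat f ⟨k - 1, hkn⟩ := by
  by_contra hcon
  push_neg at hcon
  have hsub : (Finset.Iic (⟨k - 1, hkn⟩ : Fin n)).image (Tuple.sort f) ⊆
      univ.filter fun i => f i < t := by
    intro i hi
    simp only [Finset.mem_image, Finset.mem_Iic] at hi
    obtain ⟨j, hj, rfl⟩ := hi
    refine Finset.mem_filter.mpr ⟨Finset.mem_univ _, lt_of_le_of_lt ?_ hcon⟩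
    exact Tuple.monotone_sort f hj
  have hcard := Finset.card_le_card hsub
  rw [Finset.card_image_of_injective _ (Tuple.sort f).injective, Fin.card_Iic] at hcard
  have hv : ((⟨k - 1, hkn⟩ : Fin n) : ℕ) = k - 1 := rfl
  rw [hv] at hcard
  omega

lemma aux_count_small_rank {m : ℕ} (x : Fin m → ℝ) (k : ℕ) (hk : k ≤ m) :
    k ≤ (univ.filter fun j => (univ.filter fun i => x i < x j).card ≤ k - 1).card := by
  classical
  set σ := Tuple.sort x with hσ
  have hsub : (univ.filter fun j' : Fin m => (j' : ℕ) < k).image σ ⊆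
      univ.filter fun j => (univ.filter fun i => x i < x j).card ≤ k - 1 := by
    intro j hj
    simp only [Finset.mem_image, Finset.mem_filter, Finset.mem_univ, true_and] at hj ⊢
    obtain ⟨j', hj', rfl⟩ := hj
    have himg : (univ.filter fun i => x i < x (σ j')) ⊆
        (Finset.Iio j').image σ := by
      intro i hi
      simp only [Finset.mem_filter, Finset.mem_univ, true_and] at hi
      simp only [Finset.mem_image, Finset.mem_Iio]
      refine ⟨σ.symm i, ?_, σ.apply_symm_apply i⟩
      by_contra hge
      push_neg at hge
      have hmono := Tuple.monotone_sort x hge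
      simp only [Function.comp_apply, ← hσ, σ.apply_symm_apply] at hmono
      exact absurd hi (not_lt.mpr hmono)
    have h1 := Finset.card_le_card himg
    rw [Finset.card_image_of_injective _ σ.injective, Fin.card_Iio] at h1
    omega
  have h2 := Finset.card_le_card hsub
  rw [Finset.card_image_of_injective _ σ.injective] at h2
  have h3 : (univ.filter fun j' : Fin m => (j' : ℕ) < k) =
      (univ : Finset (Fin k)).image (Fin.castLE hk) := by
    ext j'
    simp only [Finset.mem_filter, Finset.mem_univ, true_and, Finset.mem_image]
    constructor
    · intro h
      exact ⟨⟨j', h⟩, Fin.ext rfl⟩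
    · rintro ⟨a, rfl⟩
      exact a.isLt
  rw [h3, Finset.card_image_of_injective _ (Fin.castLE_injective hk), Finset.card_univ,
    Fintype.card_fin] at h2
  exact h2


/-- Dual-branch conformal coverage: with dual-branch nonconformity scores
`S_i = 1 − min{P_i(v_i), Q_i(v_i)}` that are exchangeable, `q` the `k`-th
smallest calibration score (`k = ⌈(1−α)(n+1)⌉ ≤ n`) and `τ = 1 − q`, the test
token has probability at least `τ` under both branches simultaneously, with
probability at least `1 − α`. -/
theorem dual_branch_conformal_coverage {Ω : Type*} [MeasurableSpace Ω]
    (μ : Measure Ω) [IsProbabilityMeasure μ]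
    (V n : ℕ) (hV : 0 < V) (hn : 0 < n)
    (α : ℝ) (hα : α ∈ Set.Ioo (0 : ℝ) 1)
    (k : ℕ) (hk : k = ⌈(1 - α) * (n + 1 : ℝ)⌉₊) (hkn : k ≤ n)
    (P Q : Fin (n + 1) → Ω → Fin V → ℝ) (v : Fin (n + 1) → Ω → Fin V)
    (hP : ∀ i ω, (∀ x, 0 ≤ P i ω x) ∧ ∑ x, P i ω x = 1)
    (hQ : ∀ i ω, (∀ x, 0 ≤ Q i ω x) ∧ ∑ x, Q i ω x = 1)
    (S : Fin (n + 1) → Ω → ℝ)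
    (hSdef : ∀ i ω, S i ω = 1 - min (P i ω (v i ω)) (Q i ω (v i ω)))
    (hS : ∀ i, Measurable (S i))
    (hexch : ∀ σ : Equiv.Perm (Fin (n + 1)),
      μ.map (fun ω => fun i => S (σ i) ω) = μ.map (fun ω => fun i => S i ω)) :
    1 - α ≤
      (μ {ω |
        1 - orderStat (fun i : Fin n => S i.castSucc ω) ⟨k - 1, by omega⟩ ≤
          min (P (Fin.last n) ω (v (Fin.last n) ω))
              (Q (Fin.last n) ω (v (Fin.last n) ω))}).toReal := by
  classical
  obtain ⟨hα0, hα1⟩ := hα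
  have hk1 : 1 ≤ k := by
    rw [hk]
    refine Nat.one_le_iff_ne_zero.mpr (Nat.ceil_pos.mpr ?_).ne'
    have h1 : (0:ℝ) < 1 - α := by linarith
    positivity
  set E := {ω |
        1 - orderStat (fun i : Fin n => S i.castSucc ω) ⟨k - 1, by omega⟩ ≤
          min (P (Fin.last n) ω (v (Fin.last n) ω))
              (Q (Fin.last n) ω (v (Fin.last n) ω))} with hE
  let T : Ω → (Fin (n + 1) → ℝ) := fun ω i => S i ω
  have hT : Measurable T := measurable_pi_lambda _ (fun i => hS i)
  let B : Fin (n + 1) → Set (Fin (n + 1) → ℝ) := fun j =>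
    {x | (univ.filter fun i => x i < x j).card ≤ k - 1}
  have hBmeas : ∀ j, MeasurableSet (B j) := by
    intro j
    have hcard : Measurable fun x : Fin (n + 1) → ℝ =>
        (univ.filter fun i => x i < x j).card := by
      have hrw : (fun x : Fin (n + 1) → ℝ => (univ.filter fun i => x i < x j).card)
          = fun x => ∑ i : Fin (n + 1), if x i < x j then 1 else 0 := by
        funext x; rw [Finset.card_filter]
      rw [hrw]
      exact Finset.measurable_sum _ fun i _ =>
        Measurable.ite (measurableSet_lt (measurable_pi_apply i) (measurable_pi_apply j))
          measurable_const measurable_const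
    exact hcard (show MeasurableSet (Set.Iic (k - 1)) from trivial)
  set ν := μ.map T with hν
  haveI : IsProbabilityMeasure ν := Measure.isProbabilityMeasure_map hT.aemeasurable
  have hνeq : ∀ j, ν (B j) = ν (B (Fin.last n)) := by
    intro j
    set e := Equiv.swap j (Fin.last n) with he'
    set g : (Fin (n + 1) → ℝ) → (Fin (n + 1) → ℝ) := fun x i => x (e i) with hg'
    have hg : Measurable g := measurable_pi_lambda _ (fun i => measurable_pi_apply (e i))
    have hpre : g ⁻¹' B (Fin.last n) = B j := by
      ext x
      simp only [Set.mem_preimage, B, Set.mem_setOf_eq, hg']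
      have he : e (Fin.last n) = j := Equiv.swap_apply_right _ _
      simp only [he]
      have himg : (univ.filter fun i => x (e i) < x j)
          = (univ.filter fun i => x i < x j).image e.symm := by
        ext i
        simp only [Finset.mem_filter, Finset.mem_univ, true_and, Finset.mem_image]
        constructor
        · intro h; exact ⟨e i, h, e.symm_apply_apply i⟩
        · rintro ⟨a, ha, rfl⟩; rwa [e.apply_symm_apply]
      rw [himg, Finset.card_image_of_injective _ e.symm.injective]
    have hmap : ν.map g = ν := by
      rw [hν, Measure.map_map hg hT]
      have hcomp : g ∘ T = fun ω => fun i => S (e i) ω := rfl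
      rw [hcomp, hexch e]
    calc ν (B j) = ν (g ⁻¹' B (Fin.last n)) := by rw [hpre]
      _ = (ν.map g) (B (Fin.last n)) := (Measure.map_apply hg (hBmeas _)).symm
      _ = ν (B (Fin.last n)) := by rw [hmap]
  have hsum : (k : ℝ≥0∞) ≤ ∑ j : Fin (n + 1), ν (B j) := by
    calc (k : ℝ≥0∞) = ∫⁻ _x, (k : ℝ≥0∞) ∂ν := by simp
      _ ≤ ∫⁻ x, ∑ j : Fin (n + 1), (B j).indicator (1 : (Fin (n+1) → ℝ) → ℝ≥0∞) x ∂ν := by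
          apply lintegral_mono
          intro x
          show (k : ℝ≥0∞) ≤ ∑ j : Fin (n + 1), (B j).indicator (1 : (Fin (n+1) → ℝ) → ℝ≥0∞) x
          have hcount := aux_count_small_rank x k (by omega)
          have hind : ∑ j : Fin (n + 1), (B j).indicator (1 : (Fin (n+1) → ℝ) → ℝ≥0∞) x
              = ((univ.filter fun j => x ∈ B j).card : ℝ≥0∞) := by
            rw [Finset.card_filter]
            push_cast
            exact Finset.sum_congr rfl fun j _ => by
              by_cases hx : x ∈ B j <;> simp [Set.indicator_apply, hx]
          rw [hind]
          exact Nat.cast_le.mpr hcount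
      _ = ∑ j : Fin (n + 1), ν (B j) := by
          rw [lintegral_finset_sum _ (fun j _ => measurable_one.indicator (hBmeas j))]
          exact Finset.sum_congr rfl fun j _ => lintegral_indicator_one (hBmeas j)
  have hsum2 : ∑ j : Fin (n + 1), ν (B j) = ((n + 1 : ℕ) : ℝ≥0∞) * ν (B (Fin.last n)) := by
    rw [Finset.sum_congr rfl fun j _ => hνeq j, Finset.sum_const, Finset.card_univ,
      Fintype.card_fin, nsmul_eq_mul]
  have hsubE : T ⁻¹' B (Fin.last n) ⊆ E := by
    intro ω hω
    simp only [Set.mem_preimage, B, Set.mem_setOf_eq] at hω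
    have hcard : (univ.filter fun i : Fin n => S i.castSucc ω < S (Fin.last n) ω).card ≤ k - 1 := by
      refine le_trans ?_ hω
      have himg : (univ.filter fun i : Fin n => S i.castSucc ω < S (Fin.last n) ω).image
          Fin.castSucc ⊆ univ.filter fun i : Fin (n + 1) => S i ω < S (Fin.last n) ω := by
        intro i hi
        simp only [Finset.mem_image, Finset.mem_filter, Finset.mem_univ, true_and] at hi ⊢
        obtain ⟨a, ha, rfl⟩ := hi
        exact ha
      have := Finset.card_le_card himg
      rwa [Finset.card_image_of_injective _ (Fin.castSucc_injective n)] at this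
    have hle := aux_le_orderStat (fun i : Fin n => S i.castSucc ω) (S (Fin.last n) ω) k
      (by omega) hcard
    simp only [hE, Set.mem_setOf_eq]
    have hdef := hSdef (Fin.last n) ω
    linarith
  have hmono : ν (B (Fin.last n)) ≤ μ E := by
    rw [hν, Measure.map_apply hT (hBmeas _)]
    exact measure_mono hsubE
  have hENN : (k : ℝ≥0∞) ≤ ((n + 1 : ℕ) : ℝ≥0∞) * μ E := by
    calc (k : ℝ≥0∞) ≤ ∑ j : Fin (n + 1), ν (B j) := hsum
      _ = ((n + 1 : ℕ) : ℝ≥0∞) * ν (B (Fin.last n)) := hsum2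
      _ ≤ ((n + 1 : ℕ) : ℝ≥0∞) * μ E := mul_le_mul_right hmono _
  have hfin : ((n + 1 : ℕ) : ℝ≥0∞) * μ E ≠ ∞ :=
    ENNReal.mul_ne_top (by simp) (measure_ne_top μ _)
  have hreal := ENNReal.toReal_mono hfin hENN
  rw [ENNReal.toReal_mul] at hreal
  simp only [ENNReal.toReal_natCast] at hreal
  have hceil := Nat.le_ceil ((1 - α) * (n + 1 : ℝ))
  rw [← hk] at hceil
  have hpos : (0:ℝ) < ((n : ℝ) + 1) := by positivity
  have hcast : ((n + 1 : ℕ) : ℝ) = (n : ℝ) + 1 := by push_cast; ring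
  rw [hcast] at hreal
  nlinarith [hreal, hceil, hpos]
end

section
/- Let V be a positive natural number and z_F, z_CF : Fin V → ℝ. For λ ∈ [0,1] write π̂_λ = softmax((1−λ)·z_F + λ·z_CF) and π_CF = softmax(z_CF). Then for all 0 ≤ λ₁ ≤ λ₂ ≤ 1, KL(π̂_{λ₂} ‖ π_CF) ≤ KL(π̂_{λ₁} ‖ π_CF); moreover KL(π̂_λ ‖ π_CF) = 0 if and only if π̂_λ = π_CF, which holds if and only if λ = 1 or softmax(z_F) = softmax(z_CF). -/
open Finset

/-- The softmax distribution of a logit vector. -/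
noncomputable def softmax {V : ℕ} (z : Fin V → ℝ) : Fin V → ℝ :=
  fun v => Real.exp (z v) / ∑ u, Real.exp (z u)

/-- The fused logits `(1−λ)·z_F + λ·z_CF`. -/
noncomputable def fuse {V : ℕ} (zF zCF : Fin V → ℝ) (l : ℝ) : Fin V → ℝ :=
  fun v => (1 - l) * zF v + l * zCF v

noncomputable def Zs {V : ℕ} (z : Fin V → ℝ) : ℝ := ∑ u, Real.exp (z u)

lemma Zs_pos {V : ℕ} (hV : 0 < V) (z : Fin V → ℝ) : 0 < Zs z := by
  have : Nonempty (Fin V) := Fin.pos_iff_nonempty.mp hV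
  exact Finset.sum_pos (fun u _ => Real.exp_pos _) Finset.univ_nonempty

lemma softmax_pos {V : ℕ} (hV : 0 < V) (z : Fin V → ℝ) (v : Fin V) :
    0 < softmax z v :=
  div_pos (Real.exp_pos _) (Zs_pos hV z)

lemma softmax_sum_one {V : ℕ} (hV : 0 < V) (z : Fin V → ℝ) :
    ∑ v, softmax z v = 1 := by
  have hZ := (Zs_pos hV z).ne'
  simp only [softmax, ← Finset.sum_div]
  exact div_self hZ

lemma gibbs_s15 {V : ℕ} (P Q : Fin V → ℝ) (hP : ∀ v, 0 < P v) (hQ : ∀ v, 0 < Q v)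
    (hPs : ∑ v, P v = 1) (hQs : ∑ v, Q v = 1) :
    0 ≤ KL P Q ∧ (KL P Q = 0 ↔ P = Q) := by
  have key : KL P Q = ∑ v, (P v * Real.log (P v / Q v) + Q v - P v) := by
    rw [KL]
    rw [Finset.sum_sub_distrib, Finset.sum_add_distrib, hPs, hQs]
    ring
  have hterm : ∀ v, 0 ≤ P v * Real.log (P v / Q v) + Q v - P v := by
    intro v
    have h1 : Real.log (Q v / P v) ≤ Q v / P v - 1 :=
      Real.log_le_sub_one_of_pos (div_pos (hQ v) (hP v))
    have h2 : Real.log (P v / Q v) = - Real.log (Q v / P v) := by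
      rw [← Real.log_inv, inv_div]
    have h3 : P v * (Q v / P v) = Q v := by
      rw [mul_comm]; exact div_mul_cancel₀ (Q v) (hP v).ne'
    have h4 : P v * Real.log (P v / Q v) = -(P v * Real.log (Q v / P v)) := by
      rw [h2]; ring
    nlinarith [mul_le_mul_of_nonneg_left h1 (hP v).le]
  constructor
  · rw [key]; exact Finset.sum_nonneg fun v _ => hterm v
  constructor
  · intro h0
    rw [key] at h0
    have hall := (Finset.sum_eq_zero_iff_of_nonneg (fun v _ => hterm v)).mp h0
    funext v
    by_contra hne
    have hne' : Q v / P v ≠ 1 := by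
      intro h; apply hne
      have := (div_eq_one_iff_eq (hP v).ne').mp h
      linarith
    have h1 : Real.log (Q v / P v) < Q v / P v - 1 :=
      Real.log_lt_sub_one_of_pos (div_pos (hQ v) (hP v)) hne'
    have h2 : Real.log (P v / Q v) = - Real.log (Q v / P v) := by
      rw [← Real.log_inv, inv_div]
    have h3 : P v * (Q v / P v) = Q v := by
      rw [mul_comm]; exact div_mul_cancel₀ (Q v) (hP v).ne'
    have h4 : P v * Real.log (P v / Q v) = -(P v * Real.log (Q v / P v)) := by
      rw [h2]; ring
    have := hall v (Finset.mem_univ v)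
    nlinarith [mul_lt_mul_of_pos_left h1 (hP v)]
  · intro h; subst h
    rw [KL]
    apply Finset.sum_eq_zero
    intro v _
    rw [div_self (hP v).ne', Real.log_one, mul_zero]

lemma softmax_shift {V : ℕ} (z : Fin V → ℝ) (c : ℝ) :
    softmax (fun v => z v + c) = softmax z := by
  funext v
  simp only [softmax, Real.exp_add, ← Finset.sum_mul]
  rw [mul_div_mul_right]
  exact (Real.exp_pos c).ne'

lemma softmax_eq_diff {V : ℕ} (hV : 0 < V) (a b : Fin V → ℝ)
    (h : softmax a = softmax b) (v : Fin V) :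
    a v - b v = Real.log (Zs a) - Real.log (Zs b) := by
  have hv := congrFun h v
  simp only [softmax] at hv
  have hZa := Zs_pos hV a
  have hZb := Zs_pos hV b
  have hv' : Real.exp (a v) / Zs a = Real.exp (b v) / Zs b := hv
  rw [div_eq_div_iff hZa.ne' hZb.ne'] at hv'
  have := hv' 
  have hl := congrArg Real.log this
  rw [Real.log_mul (Real.exp_pos _).ne' hZb.ne',
      Real.log_mul (Real.exp_pos _).ne' hZa.ne', Real.log_exp, Real.log_exp] at hl
  linarith

/-- KL between softmaxes in terms of logits. -/
lemma KL_softmax_eq {V : ℕ} (hV : 0 < V) (a b : Fin V → ℝ) :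
    KL (softmax a) (softmax b) =
      (∑ v, softmax a v * (a v - b v)) - Real.log (Zs a) + Real.log (Zs b) := by
  have hZa := Zs_pos hV a
  have hZb := Zs_pos hV b
  have hla : ∀ v, Real.log (softmax a v) = a v - Real.log (Zs a) := by
    intro v
    rw [show softmax a v = Real.exp (a v) / Zs a from rfl,
        Real.log_div (Real.exp_pos _).ne' hZa.ne', Real.log_exp]
  have hlb : ∀ v, Real.log (softmax b v) = b v - Real.log (Zs b) := by
    intro v
    rw [show softmax b v = Real.exp (b v) / Zs b from rfl,
        Real.log_div (Real.exp_pos _).ne' hZb.ne', Real.log_exp]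
  have hterm : ∀ v ∈ Finset.univ, softmax a v * Real.log (softmax a v / softmax b v)
      = softmax a v * (a v - b v)
        - softmax a v * (Real.log (Zs a) - Real.log (Zs b)) := by
    intro v _
    rw [Real.log_div (softmax_pos hV a v).ne' (softmax_pos hV b v).ne', hla v, hlb v]
    ring
  rw [KL, Finset.sum_congr rfl hterm, Finset.sum_sub_distrib, ← Finset.sum_mul,
      softmax_sum_one hV a]
  ring

/-- Monotone KL decay of the fused distribution toward the counterfactual
branch, with fixed-point characterization: `KL(π̂_λ ‖ π_CF)` is nonincreasing
in `λ` on `[0,1]`, vanishes iff `π̂_λ = π_CF`, which holds iff `λ = 1` or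
`softmax z_F = softmax z_CF`. -/
theorem kl_fused_monotone_and_fixed_points (V : ℕ) (hV : 0 < V)
    (zF zCF : Fin V → ℝ) :
    (∀ l₁ l₂ : ℝ, 0 ≤ l₁ → l₁ ≤ l₂ → l₂ ≤ 1 →
      KL (softmax (fuse zF zCF l₂)) (softmax zCF) ≤
        KL (softmax (fuse zF zCF l₁)) (softmax zCF)) ∧
    (∀ l : ℝ, l ∈ Set.Icc (0 : ℝ) 1 →
      (KL (softmax (fuse zF zCF l)) (softmax zCF) = 0 ↔
        softmax (fuse zF zCF l) = softmax zCF) ∧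
      (softmax (fuse zF zCF l) = softmax zCF ↔
        (l = 1 ∨ softmax zF = softmax zCF))) := by
  set d : Fin V → ℝ := fun v => zF v - zCF v with hd
  set L : ℝ → Fin V → ℝ := fun t v => zCF v + t * d v with hL
  have hfuse : ∀ l : ℝ, fuse zF zCF l = L (1 - l) := by
    intro l; funext v; simp only [fuse, hL, hd]; ring
  have hL0 : L 0 = zCF := by funext v; simp [hL]
  set m : ℝ → ℝ := fun t => ∑ v, softmax (L t) v * d v with hm
  set A : ℝ → ℝ := fun t => Real.log (Zs (L t)) with hA
  have hKL : ∀ s t : ℝ, KL (softmax (L s)) (softmax (L t))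
      = (s - t) * m s - A s + A t := by
    intro s t
    rw [KL_softmax_eq hV]
    have : ∀ v ∈ Finset.univ, softmax (L s) v * (L s v - L t v)
        = (s - t) * (softmax (L s) v * d v) := by
      intro v _; simp only [hL]; ring
    rw [Finset.sum_congr rfl this, ← Finset.mul_sum]
  have hgibbs : ∀ s t : ℝ, 0 ≤ KL (softmax (L s)) (softmax (L t))
      ∧ (KL (softmax (L s)) (softmax (L t)) = 0 ↔ softmax (L s) = softmax (L t)) :=
    fun s t => gibbs_s15 _ _ (softmax_pos hV _) (softmax_pos hV _)
      (softmax_sum_one hV _) (softmax_sum_one hV _)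
  -- monotonicity of g t = KL(softmax (L t) ‖ softmax (L 0)) in t ≥ 0
  have hmono : ∀ t₁ t₂ : ℝ, 0 ≤ t₁ → t₁ ≤ t₂ →
      KL (softmax (L t₁)) (softmax (L 0)) ≤ KL (softmax (L t₂)) (softmax (L 0)) := by
    intro t₁ t₂ ht0 ht12
    rcases eq_or_lt_of_le ht12 with rfl | hlt
    · exact le_rfl
    · have K21 := (hgibbs t₂ t₁).1
      have K12 := (hgibbs t₁ t₂).1
      rw [hKL] at K21 K12
      rw [hKL t₁ 0, hKL t₂ 0]
      have hmm : m t₁ ≤ m t₂ := by nlinarith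
      nlinarith [mul_le_mul_of_nonneg_left hmm ht0, K21]
  refine ⟨?_, ?_⟩
  · intro l₁ l₂ h0 h12 h21
    have := hmono (1 - l₂) (1 - l₁) (by linarith) (by linarith)
    rwa [hfuse l₁, hfuse l₂, ← hL0]
  · intro l hl
    constructor
    · have := (gibbs_s15 (softmax (fuse zF zCF l)) (softmax zCF)
        (softmax_pos hV _) (softmax_pos hV _)
        (softmax_sum_one hV _) (softmax_sum_one hV _)).2
      exact this
    · constructor
      · intro h
        by_cases h1 : l = 1
        · exact Or.inl h1
        · right
          have hdiff := softmax_eq_diff hV _ _ h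
          set c := Real.log (Zs (fuse zF zCF l)) - Real.log (Zs zCF) with hc
          have hne : (1 : ℝ) - l ≠ 0 := fun hz => h1 (by linarith)
          have hzf : ∀ v, zF v = zCF v + c / (1 - l) := by
            intro v
            have hv := hdiff v
            simp only [fuse] at hv
            have h' : c / (1 - l) = zF v - zCF v := by
              rw [div_eq_iff hne]; linear_combination -hv
            linarith
          have : zF = fun v => zCF v + c / (1 - l) := funext hzf
          rw [this, softmax_shift]
      · rintro (rfl | h)
        · have : fuse zF zCF 1 = zCF := by funext v; simp [fuse]
          rw [this]
        · have hdiff := softmax_eq_diff hV _ _ h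
          set c := Real.log (Zs zF) - Real.log (Zs zCF) with hc
          have : fuse zF zCF l = fun v => zCF v + (1 - l) * c := by
            funext v
            simp only [fuse]
            linear_combination (1 - l) * (hdiff v)
          rw [this, softmax_shift]
end
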